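/- arXiv:2011.06530 — 5 statements merged into one kernel-verified Lean document; each statement's English description precedes it below -/
import Mathlib

section
/- Let G = (V, E) be a hypergraph and x, x̃ ∈ ℝ^V two vectors such that |x_v − x̃_v| ≤ δ for every v ∈ V, for some δ ≥ 0. Then for every hyperedge e ∈ E, |Q_x(e) − Q_{x̃}(e)| ≤ 4δ(√(Q_x(e)) + δ), where Q_x(e) = max_{a,b ∈ e} (x_a − x_b)². -/
/-!
Write `Q_x(e) = D_x(e)²` with `D_x(e) = max_{a,b ∈ e} |x_a - x_b|`. A maximum of `ε`-close
families is `ε`-close, and each `|x_a - x_b|` moves by at most `2δ`, so `|D_x(e) - D_x̃(e)| ≤ 2δ`.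
Then `|D² - D̃²| = |D - D̃| (D + D̃) ≤ 2δ (2D + 2δ)`.
-/

namespace Finset

variable {ι α : Type*} [AddCommGroup α] [LinearOrder α] [IsOrderedAddMonoid α]

theorem sup'_sub_sup'_le (s : Finset ι) (hs : s.Nonempty) {f g : ι → α} {ε : α}
    (h : ∀ i ∈ s, f i - g i ≤ ε) : s.sup' hs f - s.sup' hs g ≤ ε := by
  rw [sub_le_iff_le_add]
  refine sup'_le hs f fun i hi => (sub_le_iff_le_add.mp (h i hi)).trans ?_
  gcongr
  exact le_sup' g hi

theorem abs_sup'_sub_sup'_le (s : Finset ι) (hs : s.Nonempty) {f g : ι → α} {ε : α}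
    (h : ∀ i ∈ s, |f i - g i| ≤ ε) : |s.sup' hs f - s.sup' hs g| ≤ ε :=
  abs_sub_le_iff.mpr
    ⟨sup'_sub_sup'_le s hs fun i hi => (abs_sub_le_iff.mp (h i hi)).1,
      sup'_sub_sup'_le s hs fun i hi => (abs_sub_le_iff.mp (h i hi)).2⟩

end Finset

theorem abs_sq_sub_sq_le_of_abs_sub_le {a b ε : ℝ} (ha : 0 ≤ a) (h : |a - b| ≤ ε) :
    |a ^ 2 - b ^ 2| ≤ ε * (2 * a + ε) := by
  obtain ⟨h₁, h₂⟩ := abs_sub_le_iff.mp h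
  rw [abs_le]
  constructor <;> nlinarith

namespace Hyperedge

variable {V : Type*} (e : Finset V) (he : e.Nonempty)

def energy (x : V → ℝ) : ℝ :=
  e.sup' he fun a => e.sup' he fun b => (x a - x b) ^ 2

def spread (x : V → ℝ) : ℝ :=
  e.sup' he fun a => e.sup' he fun b => |x a - x b|

theorem spread_nonneg (x : V → ℝ) : 0 ≤ spread e he x := by
  obtain ⟨v, hv⟩ := he
  exact Finset.le_sup'_of_le _ hv (Finset.le_sup'_of_le _ hv (abs_nonneg _))

theorem sqrt_energy (x : V → ℝ) : √(energy e he x) = spread e he x := by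
  have sqrt_sup' : ∀ f : V → ℝ, √(e.sup' he f) = e.sup' he fun a => √(f a) := fun f =>
    Finset.apply_sup'_eq_sup'_comp he Real.sqrt fun _ _ => Real.sqrt_monotone.map_sup _ _
  simp only [energy, spread, sqrt_sup', Real.sqrt_sq_eq_abs]

theorem energy_eq_spread_sq (x : V → ℝ) : energy e he x = spread e he x ^ 2 := by
  have hQ : 0 ≤ energy e he x := by
    obtain ⟨v, hv⟩ := he
    exact Finset.le_sup'_of_le _ hv (Finset.le_sup'_of_le _ hv (sq_nonneg _))
  rw [← sqrt_energy, Real.sq_sqrt hQ]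

theorem abs_spread_sub_spread_le {x y : V → ℝ} {δ : ℝ} (h : ∀ v ∈ e, |x v - y v| ≤ δ) :
    |spread e he x - spread e he y| ≤ 2 * δ := by
  refine Finset.abs_sup'_sub_sup'_le e he fun a ha =>
    Finset.abs_sup'_sub_sup'_le e he fun b hb => ?_
  calc |(|x a - x b| - |y a - y b|)| ≤ |(x a - y a) - (x b - y b)| := by
        rw [sub_sub_sub_comm]; exact abs_abs_sub_abs_le_abs_sub _ _
    _ ≤ |x a - y a| + |x b - y b| := abs_sub _ _
    _ ≤ 2 * δ := by linarith [h a ha, h b hb]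

end Hyperedge

open Hyperedge

theorem stmt_1_general {V : Type*} (e : Finset V) (he : e.Nonempty) (x xt : V → ℝ)
    (δ : ℝ) (h : ∀ v : V, |x v - xt v| ≤ δ) :
    |e.sup' he (fun a => e.sup' he fun b => (x a - x b) ^ 2) -
        e.sup' he (fun a => e.sup' he fun b => (xt a - xt b) ^ 2)| ≤
      4 * δ * (Real.sqrt (e.sup' he (fun a => e.sup' he fun b => (x a - x b) ^ 2)) + δ) := by
  change |energy e he x - energy e he xt| ≤ 4 * δ * (√(energy e he x) + δ)
  rw [sqrt_energy, energy_eq_spread_sq, energy_eq_spread_sq]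
  calc _ ≤ 2 * δ * (2 * spread e he x + 2 * δ) :=
        abs_sq_sub_sq_le_of_abs_sub_le (spread_nonneg e he x)
          (abs_spread_sub_spread_le e he fun v _ => h v)
    _ = 4 * δ * (spread e he x + δ) := by ring

/-- Perturbing a vector by at most `δ` in each coordinate changes the energy of a
hyperedge by at most `4δ(√(Q_x(e)) + δ)`. -/
theorem stmt_1 {V : Type*} (e : Finset V) (he : e.Nonempty) (x xt : V → ℝ)
    (δ : ℝ) (hδ : 0 ≤ δ) (h : ∀ v : V, |x v - xt v| ≤ δ) :
    |e.sup' he (fun a => e.sup' he fun b => (x a - x b) ^ 2) -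
        e.sup' he (fun a => e.sup' he fun b => (xt a - xt b) ^ 2)| ≤
      4 * δ * (Real.sqrt (e.sup' he (fun a => e.sup' he fun b => (x a - x b) ^ 2)) + δ) :=
  stmt_1_general e he x xt δ h
end

section
/- Let G = (V, E) be an r-uniform hypergraph with expansion at least Φ where Φ ≤ 2/r. Then for every vector x ∈ ℝ^V with Σ_{v∈V} x_v d(v) = 0, the energy satisfies Q(x) ≥ (rΦ²/32) · Σ_{v∈V} x_v² d(v). -/
/-!
Shift `x` by a weighted median `c` and split `x - c` into its positive and negative parts; each
is supported on at most half of the volume. For such a nonnegative `z`, peeling off the level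
sets of `z²` one at a time and applying the expansion bound to each (a discrete co-area
argument) gives `Φ ∑ z² d ≤ ∑ₑ (maxₑ z² - minₑ z²)`. Writing `max² - min²` as
`(max - min)(max + min)`, AM-GM together with `r minₑ z² ≤ ∑_{v ∈ e} z_v²` and `rΦ ≤ 2` turns
this into `r Φ² ∑ z² d ≤ 11 Q(z)`. Both parts are `1`-Lipschitz images of `x`, so their energies
are at most `Q(x)`, and centering at the `d`-mean `0` only decreases `∑ x² d`; hence
`r Φ² ∑ x² d ≤ 22 Q(x)`.
-/

open Finset

lemma Multiset.sum_map_le_sum_map_of_le {α : Type*} {s t : Multiset α} (hst : s ≤ t) {g : α → ℝ}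
    (hg : ∀ a ∈ t, 0 ≤ g a) : (s.map g).sum ≤ (t.map g).sum := by
  obtain ⟨u, rfl⟩ := Multiset.le_iff_exists_add.1 hst
  rw [Multiset.map_add, Multiset.sum_add]
  refine le_add_of_nonneg_right (Multiset.sum_nonneg fun _ h => ?_)
  obtain ⟨a, ha, rfl⟩ := Multiset.mem_map.1 h
  exact hg a (Multiset.mem_add.2 (Or.inr ha))

lemma sq_sub_eq_max_sq_add_max_sq (a c : ℝ) :
    (a - c) ^ 2 = max (a - c) 0 ^ 2 + max (c - a) 0 ^ 2 := by
  rcases le_total a c with h | h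
  · rw [max_eq_right (by linarith), max_eq_left (by linarith)]; ring
  · rw [max_eq_left (by linarith), max_eq_right (by linarith)]; ring

section Oscillation

variable {V : Type*} [DecidableEq V] {f g : V → ℝ} {e : Multiset V} {a b : V}

noncomputable def edgeMax (f : V → ℝ) (e : Multiset V) : ℝ :=
  if h : e.toFinset.Nonempty then e.toFinset.sup' h f else 0

noncomputable def edgeMin (f : V → ℝ) (e : Multiset V) : ℝ :=
  if h : e.toFinset.Nonempty then e.toFinset.inf' h f else 0

noncomputable def edgeOsc (f : V → ℝ) (e : Multiset V) : ℝ := edgeMax f e - edgeMin f e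

@[simp] lemma edgeMax_zero : edgeMax f 0 = 0 := by simp [edgeMax]

@[simp] lemma edgeMin_zero : edgeMin f 0 = 0 := by simp [edgeMin]

@[simp] lemma edgeOsc_zero : edgeOsc f 0 = 0 := by simp [edgeOsc]

lemma le_edgeMax (ha : a ∈ e) : f a ≤ edgeMax f e := by
  have h : e.toFinset.Nonempty := ⟨a, Multiset.mem_toFinset.2 ha⟩
  rw [edgeMax, dif_pos h]
  exact le_sup' f (Multiset.mem_toFinset.2 ha)

lemma edgeMin_le (ha : a ∈ e) : edgeMin f e ≤ f a := by
  have h : e.toFinset.Nonempty := ⟨a, Multiset.mem_toFinset.2 ha⟩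
  rw [edgeMin, dif_pos h]
  exact inf'_le f (Multiset.mem_toFinset.2 ha)

lemma exists_eq_edgeMax (he : e ≠ 0) : ∃ a ∈ e, f a = edgeMax f e := by
  have h : e.toFinset.Nonempty := Multiset.toFinset_nonempty.2 he
  obtain ⟨a, ha, hfa⟩ := exists_mem_eq_sup' h f
  exact ⟨a, Multiset.mem_toFinset.1 ha, by rw [edgeMax, dif_pos h, hfa]⟩

lemma exists_eq_edgeMin (he : e ≠ 0) : ∃ a ∈ e, f a = edgeMin f e := by
  have h : e.toFinset.Nonempty := Multiset.toFinset_nonempty.2 he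
  obtain ⟨a, ha, hfa⟩ := exists_mem_eq_inf' h f
  exact ⟨a, Multiset.mem_toFinset.1 ha, by rw [edgeMin, dif_pos h, hfa]⟩

lemma edgeMin_nonneg (hf : ∀ v ∈ e, 0 ≤ f v) : 0 ≤ edgeMin f e := by
  rcases eq_or_ne e 0 with rfl | he
  · simp
  · obtain ⟨a, ha, hfa⟩ := exists_eq_edgeMin (f := f) he
    exact hfa ▸ hf a ha

lemma sub_le_edgeOsc (ha : a ∈ e) (hb : b ∈ e) : f a - f b ≤ edgeOsc f e :=
  sub_le_sub (le_edgeMax ha) (edgeMin_le hb)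

lemma edgeOsc_nonneg : 0 ≤ edgeOsc f e := by
  rcases eq_or_ne e 0 with rfl | he
  · simp
  · obtain ⟨a, ha⟩ := Multiset.exists_mem_of_ne_zero he
    simpa using sub_le_edgeOsc (f := f) ha ha

lemma edgeOsc_le_edgeOsc (h : ∀ a ∈ e, ∀ b ∈ e, |g a - g b| ≤ |f a - f b|) :
    edgeOsc g e ≤ edgeOsc f e := by
  rcases eq_or_ne e 0 with rfl | he
  · simp
  obtain ⟨a, ha, hga⟩ := exists_eq_edgeMax (f := g) he
  obtain ⟨b, hb, hgb⟩ := exists_eq_edgeMin (f := g) he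
  calc edgeOsc g e = g a - g b := by rw [edgeOsc, hga, hgb]
    _ ≤ |f a - f b| := (le_abs_self _).trans (h a ha b hb)
    _ ≤ edgeOsc f e := abs_sub_le_iff.2 ⟨sub_le_edgeOsc ha hb, sub_le_edgeOsc hb ha⟩

lemma MonotoneOn.edgeMax_comp {s : Set ℝ} {φ : ℝ → ℝ} (hφ : MonotoneOn φ s)
    (hf : ∀ v ∈ e, f v ∈ s) (he : e ≠ 0) : edgeMax (φ ∘ f) e = φ (edgeMax f e) := by
  obtain ⟨a, ha, hfa⟩ := exists_eq_edgeMax (f := f) he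
  obtain ⟨b, hb, hφb⟩ := exists_eq_edgeMax (f := φ ∘ f) he
  refine le_antisymm ?_ (hfa ▸ le_edgeMax (f := φ ∘ f) ha)
  rw [← hφb, ← hfa]
  exact hφ (hf b hb) (hf a ha) (hfa ▸ le_edgeMax hb)

lemma MonotoneOn.edgeMin_comp {s : Set ℝ} {φ : ℝ → ℝ} (hφ : MonotoneOn φ s)
    (hf : ∀ v ∈ e, f v ∈ s) (he : e ≠ 0) : edgeMin (φ ∘ f) e = φ (edgeMin f e) := by
  obtain ⟨a, ha, hfa⟩ := exists_eq_edgeMin (f := f) he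
  obtain ⟨b, hb, hφb⟩ := exists_eq_edgeMin (f := φ ∘ f) he
  refine le_antisymm (hfa ▸ edgeMin_le (f := φ ∘ f) ha) ?_
  rw [← hφb, ← hfa]
  exact hφ (hf a ha) (hf b hb) (hfa ▸ edgeMin_le hb)

lemma edgeOsc_eq_edgeOsc_min_add_edgeOsc_max (c : ℝ) :
    edgeOsc f e = edgeOsc (fun v => min (f v) c) e + edgeOsc (fun v => max (f v - c) 0) e := by
  rcases eq_or_ne e 0 with rfl | he
  · simp
  have hmin : Monotone fun t : ℝ => min t c := fun _ _ h => min_le_min_right c h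
  have hmax : Monotone fun t : ℝ => max (t - c) 0 := fun _ _ h => max_le_max_right 0 (by linarith)
  have hsplit : ∀ t : ℝ, t = min t c + max (t - c) 0 := fun t => by
    rcases le_total t c with h | h <;> simp [h, sub_nonpos.2, sub_nonneg.2]
  change _ = edgeOsc ((fun t => min t c) ∘ f) e + edgeOsc ((fun t => max (t - c) 0) ∘ f) e
  simp only [edgeOsc, (hmin.monotoneOn Set.univ).edgeMax_comp (fun _ _ => trivial) he,
    (hmin.monotoneOn Set.univ).edgeMin_comp (fun _ _ => trivial) he,
    (hmax.monotoneOn Set.univ).edgeMax_comp (fun _ _ => trivial) he,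
    (hmax.monotoneOn Set.univ).edgeMin_comp (fun _ _ => trivial) he]
  linarith [hsplit (edgeMax f e), hsplit (edgeMin f e)]

lemma edgeOsc_sq (hf : ∀ v ∈ e, 0 ≤ f v) :
    edgeOsc (fun v => f v ^ 2) e = edgeMax f e ^ 2 - edgeMin f e ^ 2 := by
  rcases eq_or_ne e 0 with rfl | he
  · simp
  have hsq : MonotoneOn (fun t : ℝ => t ^ 2) (Set.Ici 0) := pow_left_monotoneOn
  exact congrArg₂ (· - ·) (hsq.edgeMax_comp hf he) (hsq.edgeMin_comp hf he)

lemma sSup_sq_sub_eq_edgeOsc_sq (x : V → ℝ) (e : Multiset V) :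
    sSup {y : ℝ | ∃ a ∈ e, ∃ b ∈ e, y = (x a - x b) ^ 2} = edgeOsc x e ^ 2 := by
  rcases eq_or_ne e 0 with rfl | he
  · simp
  obtain ⟨a, ha, hxa⟩ := exists_eq_edgeMax (f := x) he
  obtain ⟨b, hb, hxb⟩ := exists_eq_edgeMin (f := x) he
  refine IsGreatest.csSup_eq ⟨⟨a, ha, b, hb, by rw [edgeOsc, hxa, hxb]⟩, ?_⟩
  rintro y ⟨a', ha', b', hb', rfl⟩
  exact sq_le_sq' (by linarith [sub_le_edgeOsc (f := x) hb' ha']) (sub_le_edgeOsc ha' hb')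

noncomputable def energy (E : Multiset (Multiset V)) (x : V → ℝ) : ℝ :=
  (E.map fun e => edgeOsc x e ^ 2).sum

lemma energy_nonneg (E : Multiset (Multiset V)) (x : V → ℝ) : 0 ≤ energy E x :=
  Multiset.sum_nonneg fun _ h => by
    obtain ⟨e, -, rfl⟩ := Multiset.mem_map.1 h
    exact sq_nonneg _

lemma energy_le_energy (E : Multiset (Multiset V)) {x y : V → ℝ}
    (h : ∀ a b, |y a - y b| ≤ |x a - x b|) : energy E y ≤ energy E x :=
  Multiset.sum_map_le_sum_map _ _ fun _ _ =>
    pow_le_pow_left₀ edgeOsc_nonneg (edgeOsc_le_edgeOsc fun a _ b _ => h a b) 2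

lemma sum_map_sSup_sq_sub_eq_energy (E : Multiset (Multiset V)) (x : V → ℝ) :
    (E.map fun e => sSup {y : ℝ | ∃ a ∈ e, ∃ b ∈ e, y = (x a - x b) ^ 2}).sum = energy E x :=
  congrArg _ (Multiset.map_congr rfl fun e _ => sSup_sq_sub_eq_edgeOsc_sq x e)

end Oscillation

section RealValued

variable {V : Type*} [Fintype V]

noncomputable def posValues (f : V → ℝ) : Finset ℝ := (univ.image f).filter (0 < ·)

lemma card_posValues_max_sub_lt {f : V → ℝ} {t : ℝ} (ht : t ∈ posValues f) :
    (posValues fun v => max (f v - t) 0).card < (posValues f).card := by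
  have ht0 : 0 < t := (mem_filter.1 ht).2
  have hsub : posValues (fun v => max (f v - t) 0) ⊆ ((posValues f).erase t).image (· - t) := by
    intro u hu
    obtain ⟨⟨v, -, rfl⟩, hv⟩ : (∃ v ∈ univ, max (f v - t) 0 = u) ∧ 0 < u := by
      simpa [posValues] using hu
    have htv : t < f v := by simpa using hv
    refine mem_image.2 ⟨f v, mem_erase.2 ⟨htv.ne', ?_⟩, by simp [htv.le]⟩
    exact mem_filter.2 ⟨mem_image_of_mem f (mem_univ v), ht0.trans htv⟩
  calc (posValues fun v => max (f v - t) 0).card ≤ ((posValues f).erase t).card :=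
        (card_le_card hsub).trans card_image_le
    _ < (posValues f).card := card_erase_lt_of_mem ht

lemma sum_sq_mul_le_sum_sub_sq_mul {d : V → ℝ} (hd : ∀ v, 0 ≤ d v) {x : V → ℝ}
    (hx : ∑ v, x v * d v = 0) (c : ℝ) : ∑ v, x v ^ 2 * d v ≤ ∑ v, (x v - c) ^ 2 * d v := by
  have hexpand : ∀ v, (x v - c) ^ 2 * d v = x v ^ 2 * d v - 2 * c * (x v * d v) + c ^ 2 * d v :=
    fun v => by ring
  simp_rw [hexpand, sum_add_distrib, sum_sub_distrib, ← mul_sum, hx]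
  nlinarith [sum_nonneg fun v (_ : v ∈ univ) => hd v, sq_nonneg c]

end RealValued

section Hypergraph

variable {V : Type*} [Fintype V] [DecidableEq V]

lemma sum_le_sum_compl_of_subset {d : V → ℝ} (hd : ∀ v, 0 ≤ d v) {S T : Finset V} (hST : S ⊆ T)
    (hT : ∑ v ∈ T, d v ≤ ∑ v ∈ Tᶜ, d v) : ∑ v ∈ S, d v ≤ ∑ v ∈ Sᶜ, d v :=
  calc ∑ v ∈ S, d v ≤ ∑ v ∈ T, d v := sum_le_sum_of_subset_of_nonneg hST fun v _ _ => hd v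
    _ ≤ ∑ v ∈ Tᶜ, d v := hT
    _ ≤ ∑ v ∈ Sᶜ, d v :=
      sum_le_sum_of_subset_of_nonneg (compl_subset_compl.2 hST) fun v _ _ => hd v

lemma exists_weighted_median {d : V → ℝ} (hd : ∀ v, 0 ≤ d v) (x : V → ℝ) :
    ∃ c, ∑ v ∈ univ.filter (c < x ·), d v ≤ ∑ v ∈ (univ.filter (c < x ·))ᶜ, d v ∧
      ∑ v ∈ univ.filter (x · < c), d v ≤ ∑ v ∈ (univ.filter (x · < c))ᶜ, d v := by
  rcases isEmpty_or_nonempty V with hV | hV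
  · exact ⟨0, by simp [univ_eq_empty]⟩
  set K := (univ.image x).filter fun t =>
    ∑ v ∈ univ.filter (t < x ·), d v ≤ ∑ v ∈ (univ.filter (t < x ·))ᶜ, d v
  have hK : K.Nonempty := by
    obtain ⟨w, -, hw⟩ := exists_max_image univ x univ_nonempty
    refine ⟨x w, mem_filter.2 ⟨mem_image_of_mem x (mem_univ w), ?_⟩⟩
    rw [filter_false_of_mem fun v _ => not_lt.2 (hw v (mem_univ v))]
    simpa using sum_nonneg fun v _ => hd v
  set c := K.min' hK
  refine ⟨c, (mem_filter.1 (K.min'_mem hK)).2, ?_⟩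
  by_contra! hlt
  set L := univ.filter (x · < c)
  have hL : L.Nonempty := by
    by_contra! h
    rw [h] at hlt
    simp only [sum_empty, compl_empty] at hlt
    exact hlt.not_ge (sum_nonneg fun v _ => hd v)
  -- the largest value `x w` below `c` would be a smaller element of `K`
  obtain ⟨w, hwL, hw⟩ := exists_max_image L x hL
  have hwc : x w < c := (mem_filter.1 hwL).2
  have hLc : univ.filter (x w < x ·) = Lᶜ := by
    ext v
    simp only [mem_filter, mem_univ, true_and, mem_compl, L, not_lt]
    exact ⟨fun h => not_lt.1 fun hv => (hw v (mem_filter.2 ⟨mem_univ v, hv⟩)).not_gt h,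
      fun h => hwc.trans_le h⟩
  have hwK : x w ∈ K := mem_filter.2 ⟨mem_image_of_mem x (mem_univ w), by
    rw [hLc, compl_compl]; exact hlt.le⟩
  exact (K.min'_le _ hwK).not_gt hwc

def cutEdges (E : Multiset (Multiset V)) (S : Finset V) : Multiset (Multiset V) :=
  E.filter fun e => (∃ a ∈ e, a ∈ S) ∧ ∃ b ∈ e, b ∉ S

lemma card_cutEdges_mul_le (E : Multiset (Multiset V)) (S : Finset V) (t : ℝ) :
    t * (cutEdges E S).card ≤ (E.map (edgeOsc fun v => if v ∈ S then t else 0)).sum := by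
  have hcut : ∀ e ∈ cutEdges E S, t ≤ edgeOsc (fun v => if v ∈ S then t else 0) e := by
    intro e he
    obtain ⟨-, ⟨a, ha, haS⟩, b, hb, hbS⟩ := Multiset.mem_filter.1 he
    simpa [haS, hbS] using sub_le_edgeOsc (f := fun v => if v ∈ S then t else 0) ha hb
  calc t * (cutEdges E S).card = ((cutEdges E S).map fun _ => t).sum := by simp [mul_comm]
    _ ≤ ((cutEdges E S).map (edgeOsc _)).sum := Multiset.sum_map_le_sum_map _ _ hcut
    _ ≤ _ := Multiset.sum_map_le_sum_map_of_le (Multiset.filter_le _ _) fun _ _ => edgeOsc_nonneg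

lemma sum_map_sum_map_eq_sum_mul_degree (E : Multiset (Multiset V)) (d : V → ℕ)
    (hd : ∀ v, d v = (E.map fun e => e.count v).sum) (g : V → ℝ) :
    (E.map fun e => (e.map g).sum).sum = ∑ v, g v * d v := by
  have hedge : ∀ e : Multiset V, (e.map g).sum = ∑ v, g v * e.count v := fun e => by
    rw [sum_multiset_map_count, sum_subset (subset_univ _)]
    · simp [nsmul_eq_mul, mul_comm]
    · intro v _ hv
      simp [Multiset.count_eq_zero.2 (by simpa using hv)]
  simp_rw [hedge, hd, Multiset.sum_map_sum, Nat.cast_multiset_sum, Multiset.map_map,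
    Function.comp_def, Multiset.sum_map_mul_left]

lemma mul_sum_le_card_cutEdges_of_expansion {E : Multiset (Multiset V)} {d : V → ℝ}
    (hd : ∀ v, 0 ≤ d v) {Φ : ℝ}
    (hexp : ∀ S : Finset V, S.Nonempty → S ≠ univ →
      Φ * min (∑ v ∈ S, d v) (∑ v ∈ Sᶜ, d v) ≤
        ((E.filter fun e => (∃ a ∈ e, a ∈ S) ∧ ∃ b ∈ e, b ∉ S).card : ℝ))
    (S : Finset V) (hS : ∑ v ∈ S, d v ≤ ∑ v ∈ Sᶜ, d v) :
    Φ * ∑ v ∈ S, d v ≤ (cutEdges E S).card := by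
  rcases S.eq_empty_or_nonempty with rfl | hne
  · simp
  by_cases hU : S = univ
  · subst hU
    have hvol : ∑ v, d v = 0 := le_antisymm (by simpa using hS) (sum_nonneg fun v _ => hd v)
    simp [hvol]
  · simpa [cutEdges, min_eq_left hS] using hexp S hne hU

theorem mul_sum_le_sum_edgeOsc (E : Multiset (Multiset V)) {d : V → ℝ} (hd : ∀ v, 0 ≤ d v)
    {Φ : ℝ} (hΦ : ∀ S : Finset V, ∑ v ∈ S, d v ≤ ∑ v ∈ Sᶜ, d v →
      Φ * ∑ v ∈ S, d v ≤ (cutEdges E S).card)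
    {f : V → ℝ} (hf : ∀ v, 0 ≤ f v)
    (hsupp : ∑ v ∈ univ.filter (0 < f ·), d v ≤ ∑ v ∈ (univ.filter (0 < f ·))ᶜ, d v) :
    Φ * ∑ v, f v * d v ≤ (E.map (edgeOsc f)).sum := by
  induction hn : (posValues f).card using Nat.strong_induction_on generalizing f with
  | _ n ih =>
  rcases (posValues f).eq_empty_or_nonempty with hP | hP
  · have hf0 : ∀ v, f v = 0 := fun v => (hf v).antisymm' <| not_lt.1 fun hv =>
      (eq_empty_iff_forall_notMem.1 hP) (f v) (mem_filter.2 ⟨mem_image_of_mem f (mem_univ v), hv⟩)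
    simpa [hf0] using Multiset.sum_nonneg fun _ h => by
      obtain ⟨e, -, rfl⟩ := Multiset.mem_map.1 h
      exact edgeOsc_nonneg
  -- peel off the lowest positive level `t` on the support `S` of `f`
  set t := (posValues f).min' hP
  set S := univ.filter (0 < f ·)
  set g := fun v => max (f v - t) 0
  have ht : t ∈ posValues f := (posValues f).min'_mem hP
  have ht0 : 0 < t := (mem_filter.1 ht).2
  have hlevel : ∀ v, min (f v) t = if v ∈ S then t else 0 := fun v => by
    by_cases hv : 0 < f v
    · have : t ≤ f v := min'_le _ _ (mem_filter.2 ⟨mem_image_of_mem f (mem_univ v), hv⟩)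
      simp [S, hv, this]
    · simp [S, le_antisymm (not_lt.1 hv) (hf v), ht0.le]
  have hsplit : ∀ v, f v = min (f v) t + g v := fun v => by
    rcases le_total (f v) t with h | h <;> simp [g, h, sub_nonpos.2, sub_nonneg.2]
  have hsum : ∑ v, f v * d v = t * ∑ v ∈ S, d v + ∑ v, g v * d v := by
    calc ∑ v, f v * d v = ∑ v, ((if v ∈ S then t else 0) * d v + g v * d v) :=
          sum_congr rfl fun v _ => by rw [hsplit v, hlevel v, add_mul]
      _ = t * ∑ v ∈ S, d v + ∑ v, g v * d v := by
          simp [sum_add_distrib, ite_mul, sum_ite_mem, mul_sum]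
  have hgS : univ.filter (0 < g ·) ⊆ S := fun v hv => by
    simp only [mem_filter, mem_univ, true_and, g, lt_max_iff, lt_irrefl, or_false, sub_pos,
      S] at hv ⊢
    exact ht0.trans hv
  have hg := ih _ (hn ▸ card_posValues_max_sub_lt ht) (fun v => le_max_right _ _)
    (sum_le_sum_compl_of_subset hd hgS hsupp) rfl
  have hcut := card_cutEdges_mul_le E S t
  have hosc : (E.map (edgeOsc f)).sum =
      (E.map (edgeOsc fun v => min (f v) t)).sum + (E.map (edgeOsc g)).sum := by
    rw [← Multiset.sum_map_add]
    exact congrArg _ (Multiset.map_congr rfl fun e _ => edgeOsc_eq_edgeOsc_min_add_edgeOsc_max t)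
  rw [hsum, hosc, funext hlevel]
  nlinarith [mul_le_mul_of_nonneg_left (hΦ S hsupp) ht0.le]

lemma mul_sum_map_edgeMin_sq_le (E : Multiset (Multiset V)) {r : ℕ}
    (hr : ∀ e ∈ E, r ≤ Multiset.card e) {d : V → ℕ}
    (hd : ∀ v, d v = (E.map fun e => e.count v).sum) {z : V → ℝ} (hz : ∀ v, 0 ≤ z v) :
    r * (E.map fun e => edgeMin z e ^ 2).sum ≤ ∑ v, z v ^ 2 * d v := by
  rw [← sum_map_sum_map_eq_sum_mul_degree E d hd, ← Multiset.sum_map_mul_left]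
  refine Multiset.sum_map_le_sum_map _ _ fun e he => ?_
  have hle : ∀ y ∈ e.map (z · ^ 2), edgeMin z e ^ 2 ≤ y := by
    simp only [Multiset.mem_map]
    rintro _ ⟨v, hv, rfl⟩
    exact pow_le_pow_left₀ (edgeMin_nonneg fun v _ => hz v) (edgeMin_le hv) 2
  calc (r : ℝ) * edgeMin z e ^ 2 ≤ Multiset.card e * edgeMin z e ^ 2 := by
        gcongr; exact_mod_cast hr e he
    _ ≤ (e.map (z · ^ 2)).sum := by simpa using Multiset.card_nsmul_le_sum hle

theorem mul_sq_mul_sum_sq_le_energy (E : Multiset (Multiset V)) {r : ℕ}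
    (hr : ∀ e ∈ E, r ≤ Multiset.card e) {d : V → ℕ}
    (hd : ∀ v, d v = (E.map fun e => e.count v).sum)
    {Φ : ℝ} (hΦ0 : 0 ≤ Φ) (hrΦ : r * Φ ≤ 2)
    (hΦ : ∀ S : Finset V, ∑ v ∈ S, (d v : ℝ) ≤ ∑ v ∈ Sᶜ, (d v : ℝ) →
      Φ * ∑ v ∈ S, (d v : ℝ) ≤ (cutEdges E S).card)
    {z : V → ℝ} (hz : ∀ v, 0 ≤ z v)
    (hsupp : ∑ v ∈ univ.filter (0 < z ·), (d v : ℝ) ≤ ∑ v ∈ (univ.filter (0 < z ·))ᶜ, (d v : ℝ)) :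
    r * Φ ^ 2 * ∑ v, z v ^ 2 * d v ≤ 11 * energy E z := by
  set β : ℝ := r * Φ
  set A := ∑ v, z v ^ 2 * d v
  set N := (E.map fun e => edgeMin z e ^ 2).sum
  have hβ : 0 ≤ β := by positivity
  have hcoarea : Φ * A ≤ (E.map fun e => edgeMax z e ^ 2 - edgeMin z e ^ 2).sum := by
    have hpos : univ.filter (0 < z · ^ 2) = univ.filter (0 < z ·) := filter_congr fun v _ =>
      ⟨fun h => (hz v).lt_of_ne' fun h0 => by simp [h0] at h, fun h => by positivity⟩
    have := mul_sum_le_sum_edgeOsc E (fun v => Nat.cast_nonneg (d v)) hΦ (f := (z · ^ 2))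
      (fun v => sq_nonneg _) (hpos ▸ hsupp)
    simpa only [edgeOsc_sq fun v _ => hz v] using this
  have hmin : r * N ≤ A := mul_sum_map_edgeMin_sq_le E hr hd hz
  have hedge : β * (E.map fun e => edgeMax z e ^ 2 - edgeMin z e ^ 2).sum ≤
      33 / 4 * energy E z + β ^ 2 / 4 * N := by
    rw [energy, ← Multiset.sum_map_mul_left, ← Multiset.sum_map_mul_left,
      ← Multiset.sum_map_mul_left, ← Multiset.sum_map_add]
    refine Multiset.sum_map_le_sum_map _ _ fun e _ => ?_
    rw [edgeOsc]
    set M := edgeMax z e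
    set m := edgeMin z e
    -- AM-GM for `β (M - m) (M + m)`, then `(M + m)² ≤ 2 (M - m)² + 8 m²` and `β ≤ 2`
    nlinarith [sq_nonneg (16 * (M - m) - β * (M + m)), sq_nonneg (M - 3 * m),
      mul_nonneg (sq_nonneg β) (sq_nonneg (M - 3 * m)),
      mul_le_mul_of_nonneg_right (show β ^ 2 ≤ 4 by nlinarith) (sq_nonneg (M - m))]
  nlinarith [mul_le_mul_of_nonneg_left hcoarea hβ,
    mul_le_mul_of_nonneg_left hmin (mul_nonneg hβ hΦ0)]

end Hypergraph

theorem stmt_3_general {V : Type*} [Fintype V] [DecidableEq V]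
    (E : Multiset (Multiset V)) (r : ℕ)
    (hunif : ∀ e ∈ E, Multiset.card e = r)
    (d : V → ℕ) (hd : ∀ v, d v = (E.map fun e => e.count v).sum)
    (Φ : ℝ) (hΦ0 : 0 ≤ Φ) (hΦ : Φ ≤ 2 / r)
    (hexp : ∀ S : Finset V, S.Nonempty → S ≠ Finset.univ →
      Φ * min (∑ v ∈ S, (d v : ℝ)) (∑ v ∈ Sᶜ, (d v : ℝ)) ≤
        ((E.filter fun e => (∃ a ∈ e, a ∈ S) ∧ ∃ b ∈ e, b ∉ S).card : ℝ))
    (x : V → ℝ) (hx : ∑ v, x v * d v = 0) :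
    ((r : ℝ) * Φ ^ 2 / 32) * ∑ v, (x v) ^ 2 * d v ≤
      (E.map fun e => sSup {y : ℝ | ∃ a ∈ e, ∃ b ∈ e, y = (x a - x b) ^ 2}).sum := by
  have hd0 : ∀ v, (0 : ℝ) ≤ d v := fun v => Nat.cast_nonneg _
  have hrΦ : (r : ℝ) * Φ ≤ 2 := by
    rw [mul_comm]; exact mul_le_of_le_div₀ zero_le_two (Nat.cast_nonneg r) hΦ
  have hcut := mul_sum_le_card_cutEdges_of_expansion hd0 hexp
  have hr : ∀ e ∈ E, r ≤ Multiset.card e := fun e he => (hunif e he).ge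
  obtain ⟨c, hc₁, hc₂⟩ := exists_weighted_median hd0 x
  have hp := mul_sq_mul_sum_sq_le_energy E hr hd hΦ0 hrΦ hcut (z := fun v => max (x v - c) 0)
    (fun v => le_max_right _ _) (by simpa [sub_pos] using hc₁)
  have hm := mul_sq_mul_sum_sq_le_energy E hr hd hΦ0 hrΦ hcut (z := fun v => max (c - x v) 0)
    (fun v => le_max_right _ _) (by simpa [sub_pos] using hc₂)
  have hQp := energy_le_energy E (x := x) (y := fun v => max (x v - c) 0) fun a b => by
    simpa using abs_max_sub_max_le_abs (x a - c) (x b - c) 0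
  have hQm := energy_le_energy E (x := x) (y := fun v => max (c - x v) 0) fun a b => by
    simpa [abs_sub_comm] using abs_max_sub_max_le_abs (c - x a) (c - x b) 0
  have hA : ∑ v, x v ^ 2 * d v ≤
      ∑ v, max (x v - c) 0 ^ 2 * d v + ∑ v, max (c - x v) 0 ^ 2 * d v := by
    simpa only [sq_sub_eq_max_sq_add_max_sq, add_mul, sum_add_distrib] using
      sum_sq_mul_le_sum_sub_sq_mul hd0 hx c
  rw [sum_map_sSup_sq_sub_eq_energy]
  linarith [mul_le_mul_of_nonneg_left hA (by positivity : (0 : ℝ) ≤ r * Φ ^ 2), energy_nonneg E x]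

/-- Hypergraph Cheeger inequality: in an `r`-uniform hypergraph with expansion at least
`Φ ≤ 2/r`, every vector `x` with `∑ v, x v * d v = 0` satisfies
`Q(x) ≥ (r Φ² / 32) ∑ v, (x v)² d v`. -/
theorem stmt_3 {V : Type*} [Fintype V] [DecidableEq V]
    (E : Multiset (Multiset V)) (r : ℕ) (hr : 0 < r)
    (hunif : ∀ e ∈ E, Multiset.card e = r)
    (d : V → ℕ) (hd : ∀ v, d v = (E.map fun e => e.count v).sum)
    (Φ : ℝ) (hΦ0 : 0 ≤ Φ) (hΦ : Φ ≤ 2 / r)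
    (hexp : ∀ S : Finset V, S.Nonempty → S ≠ Finset.univ →
      Φ * min (∑ v ∈ S, (d v : ℝ)) (∑ v ∈ Sᶜ, (d v : ℝ)) ≤
        ((E.filter fun e => (∃ a ∈ e, a ∈ S) ∧ ∃ b ∈ e, b ∉ S).card : ℝ))
    (x : V → ℝ) (hx : ∑ v, x v * d v = 0) :
    ((r : ℝ) * Φ ^ 2 / 32) * ∑ v, (x v) ^ 2 * d v ≤
      (E.map fun e => sSup {y : ℝ | ∃ a ∈ e, ∃ b ∈ e, y = (x a - x b) ^ 2}).sum :=
  stmt_3_general E r hunif d hd Φ hΦ0 hΦ hexp x hx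
end

section
/- Let G = (V, E) be a directed hypergraph on n vertices. Then Σ_{e ∈ E} 1/k(e) ≤ n², where k(e) is the overlap of hyperarc e. -/
/-!
Remove an arc `(a, b)` of minimal multiplicity `m` together with the `m` hyperarcs whose clique
contains it. The whole family is `m`-overlapping, and no overlapping subfamily through one of the
removed hyperarcs can do better than the multiplicity of `(a, b)`, so each removed hyperarc has
overlap exactly `m` and together they contribute `1` to the sum. Overlaps can only drop when
hyperarcs are removed, so induction shows that the sum is at most the number of distinct arcs,
which is at most `n²`.
-/

namespace DirectedHypergraph

open Finset

variable {V : Type*} [DecidableEq V]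

def arcMult (F : Finset (Finset V × Finset V)) (a b : V) : ℕ :=
  #(F.filter fun e => a ∈ e.1 ∧ b ∈ e.2)

def arcs (F : Finset (Finset V × Finset V)) : Finset (V × V) :=
  F.biUnion fun e => e.1 ×ˢ e.2

def IsOverlapping (F : Finset (Finset V × Finset V)) (m : ℕ) : Prop :=
  ∀ a b : V, (∃ e ∈ F, a ∈ e.1 ∧ b ∈ e.2) → m ≤ arcMult F a b

def overlapSet (F : Finset (Finset V × Finset V)) (e : Finset V × Finset V) : Set ℕ :=
  {m | ∃ F' ⊆ F, e ∈ F' ∧ IsOverlapping F' m}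

noncomputable def overlap (F : Finset (Finset V × Finset V)) (e : Finset V × Finset V) : ℕ :=
  sSup (overlapSet F e)

variable {F F' : Finset (Finset V × Finset V)} {e : Finset V × Finset V} {a b : V}

lemma mem_arcs : (a, b) ∈ arcs F ↔ ∃ e ∈ F, a ∈ e.1 ∧ b ∈ e.2 := by
  simp [arcs]

lemma one_mem_overlapSet (he : e ∈ F) : 1 ∈ overlapSet F e := by
  refine ⟨{e}, singleton_subset_iff.2 he, mem_singleton_self e, ?_⟩
  rintro a b ⟨e', he', ha, hb⟩
  rw [mem_singleton] at he'
  subst he'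
  exact card_pos.2 ⟨e', by simp [ha, hb]⟩

lemma bddAbove_overlapSet (h₁ : e.1.Nonempty) (h₂ : e.2.Nonempty) :
    BddAbove (overlapSet F e) := by
  obtain ⟨a, ha⟩ := h₁
  obtain ⟨b, hb⟩ := h₂
  refine ⟨#F, ?_⟩
  rintro m ⟨F', hF', heF', hm⟩
  calc m ≤ arcMult F' a b := hm a b ⟨e, heF', ha, hb⟩
    _ ≤ #F' := card_filter_le _ _
    _ ≤ #F := card_le_card hF'

lemma one_le_overlap (he : e ∈ F) (h₁ : e.1.Nonempty) (h₂ : e.2.Nonempty) : 1 ≤ overlap F e :=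
  le_csSup (bddAbove_overlapSet h₁ h₂) (one_mem_overlapSet he)

lemma overlap_mono (hFF' : F' ⊆ F) (he : e ∈ F') (h₁ : e.1.Nonempty) (h₂ : e.2.Nonempty) :
    overlap F' e ≤ overlap F e := by
  refine csSup_le_csSup (bddAbove_overlapSet h₁ h₂) ⟨1, one_mem_overlapSet he⟩ ?_
  rintro m ⟨F'', hF'', heF'', hm⟩
  exact ⟨F'', hF''.trans hFF', heF'', hm⟩

lemma le_overlap_of_isOverlapping {m : ℕ} (hF : IsOverlapping F m) (he : e ∈ F)
    (h₁ : e.1.Nonempty) (h₂ : e.2.Nonempty) : m ≤ overlap F e :=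
  le_csSup (bddAbove_overlapSet h₁ h₂) ⟨F, subset_rfl, he, hF⟩

lemma overlap_le_arcMult (he : e ∈ F) (ha : a ∈ e.1) (hb : b ∈ e.2) :
    overlap F e ≤ arcMult F a b := by
  obtain ⟨F', hF', heF', hm⟩ : overlap F e ∈ overlapSet F e :=
    Nat.sSup_mem ⟨1, one_mem_overlapSet he⟩ (bddAbove_overlapSet ⟨a, ha⟩ ⟨b, hb⟩)
  calc overlap F e ≤ arcMult F' a b := hm a b ⟨e, heF', ha, hb⟩
    _ ≤ arcMult F a b := card_le_card (filter_subset_filter _ hF')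

lemma overlap_eq_arcMult_of_isMin (hmin : ∀ q ∈ arcs F, arcMult F a b ≤ arcMult F q.1 q.2)
    (he : e ∈ F) (ha : a ∈ e.1) (hb : b ∈ e.2) : overlap F e = arcMult F a b := by
  refine le_antisymm (overlap_le_arcMult he ha hb) ?_
  refine le_overlap_of_isOverlapping ?_ he ⟨a, ha⟩ ⟨b, hb⟩
  exact fun a' b' h => hmin (a', b') (mem_arcs.2 h)

lemma sum_one_div_overlap_filter_of_isMin (hab : (a, b) ∈ arcs F)
    (hmin : ∀ q ∈ arcs F, arcMult F a b ≤ arcMult F q.1 q.2) :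
    ∑ e ∈ F.filter (fun e => a ∈ e.1 ∧ b ∈ e.2), (1 : ℝ) / overlap F e = 1 := by
  obtain ⟨e, he, ha, hb⟩ := mem_arcs.1 hab
  have hmult : (arcMult F a b : ℝ) ≠ 0 := by
    have : 0 < arcMult F a b := card_pos.2 ⟨e, mem_filter.2 ⟨he, ha, hb⟩⟩
    positivity
  have hconst : ∀ e ∈ F.filter (fun e => a ∈ e.1 ∧ b ∈ e.2), overlap F e = arcMult F a b :=
    fun e he => by
      obtain ⟨he, ha, hb⟩ := mem_filter.1 he
      exact overlap_eq_arcMult_of_isMin hmin he ha hb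
  rw [sum_congr rfl fun e he => by rw [hconst e he], sum_const, nsmul_eq_mul]
  exact mul_one_div_cancel hmult

lemma one_div_overlap_le_of_subset (hFF' : F' ⊆ F) (he : e ∈ F') (h₁ : e.1.Nonempty)
    (h₂ : e.2.Nonempty) : (1 : ℝ) / overlap F e ≤ 1 / overlap F' e := by
  have hpos : (0 : ℝ) < overlap F' e := by exact_mod_cast one_le_overlap he h₁ h₂
  exact one_div_le_one_div_of_le hpos (by exact_mod_cast overlap_mono hFF' he h₁ h₂)

lemma arcs_filter_not_subset_erase :
    arcs (F.filter fun e => ¬(a ∈ e.1 ∧ b ∈ e.2)) ⊆ (arcs F).erase (a, b) := by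
  rintro ⟨a', b'⟩ h
  obtain ⟨e, he, ha', hb'⟩ := mem_arcs.1 h
  rw [mem_filter] at he
  refine mem_erase.2 ⟨?_, mem_arcs.2 ⟨e, he.1, ha', hb'⟩⟩
  rintro ⟨rfl, rfl⟩
  exact he.2 ⟨ha', hb'⟩

theorem sum_one_div_overlap_le_card_arcs (hF : ∀ e ∈ F, e.1.Nonempty ∧ e.2.Nonempty) :
    ∑ e ∈ F, (1 : ℝ) / overlap F e ≤ #(arcs F) := by
  induction F using strongInduction with
  | _ F ih =>
  obtain hF₀ | ⟨e₀, he₀⟩ := F.eq_empty_or_nonempty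
  · simp [hF₀]
  obtain ⟨a₀, ha₀⟩ := (hF e₀ he₀).1
  obtain ⟨b₀, hb₀⟩ := (hF e₀ he₀).2
  obtain ⟨⟨a, b⟩, hab, hmin⟩ := exists_min_image (arcs F) (fun q => arcMult F q.1 q.2)
    ⟨(a₀, b₀), (mem_arcs.2 ⟨e₀, he₀, ha₀, hb₀⟩ : (a₀, b₀) ∈ arcs F)⟩
  set S := F.filter fun e => a ∈ e.1 ∧ b ∈ e.2
  set R := F.filter fun e => ¬(a ∈ e.1 ∧ b ∈ e.2)
  have hS : ∑ e ∈ S, (1 : ℝ) / overlap F e = 1 := sum_one_div_overlap_filter_of_isMin hab hmin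
  have hR : ∑ e ∈ R, (1 : ℝ) / overlap F e ≤ #(arcs R) := by
    have hRF : R ⊂ F := filter_ssubset.2 <| by
      obtain ⟨e, he, ha, hb⟩ := mem_arcs.1 hab
      exact ⟨e, he, not_not.2 ⟨ha, hb⟩⟩
    calc ∑ e ∈ R, (1 : ℝ) / overlap F e ≤ ∑ e ∈ R, (1 : ℝ) / overlap R e :=
          sum_le_sum fun e he => one_div_overlap_le_of_subset (filter_subset _ _) he
            (hF e (filter_subset _ _ he)).1 (hF e (filter_subset _ _ he)).2
      _ ≤ #(arcs R) := ih R hRF fun e he => hF e (filter_subset _ _ he)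
  have hcard : #(arcs R) + 1 ≤ #(arcs F) := by
    calc #(arcs R) + 1 ≤ #((arcs F).erase (a, b)) + 1 :=
          Nat.add_le_add_right (card_le_card arcs_filter_not_subset_erase) 1
      _ = #(arcs F) := card_erase_add_one hab
  calc ∑ e ∈ F, (1 : ℝ) / overlap F e = 1 + ∑ e ∈ R, (1 : ℝ) / overlap F e := by
        rw [← sum_filter_add_sum_filter_not F fun e => a ∈ e.1 ∧ b ∈ e.2, hS]
    _ ≤ 1 + #(arcs R) := by gcongr
    _ ≤ #(arcs F) := by rw [add_comm]; exact_mod_cast hcard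

end DirectedHypergraph

/-- The sum over hyperarcs of the inverse overlap is at most `n²`. -/
theorem stmt_4 {V : Type*} [Fintype V] [DecidableEq V]
    (E : Finset (Finset V × Finset V))
    (hE : ∀ e ∈ E, Disjoint e.1 e.2 ∧ e.1.Nonempty ∧ e.2.Nonempty)
    (k : Finset V × Finset V → ℕ)
    (hk : ∀ e ∈ E, k e = sSup {m : ℕ | ∃ E' ⊆ E, e ∈ E' ∧
      ∀ a b : V, (∃ e' ∈ E', a ∈ e'.1 ∧ b ∈ e'.2) →
        m ≤ (E'.filter fun e' => a ∈ e'.1 ∧ b ∈ e'.2).card}) :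
    ∑ e ∈ E, (1 : ℝ) / (k e) ≤ (Fintype.card V) ^ 2 := by
  have hk' : ∀ e ∈ E, k e = DirectedHypergraph.overlap E e := hk
  calc ∑ e ∈ E, (1 : ℝ) / (k e) = ∑ e ∈ E, (1 : ℝ) / DirectedHypergraph.overlap E e :=
        Finset.sum_congr rfl fun e he => by rw [hk' e he]
    _ ≤ (DirectedHypergraph.arcs E).card :=
        DirectedHypergraph.sum_one_div_overlap_le_card_arcs fun e he => (hE e he).2
    _ ≤ Fintype.card (V × V) := by exact_mod_cast Finset.card_le_univ _
    _ = (Fintype.card V) ^ 2 := by push_cast [Fintype.card_prod, sq]; rfl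
end

section
/- Suppose there exists an (ℓ, k, ε, g)-string compression scheme with ε ≤ 1/10. Then k ≥ (log g + 3ℓ/50)/log 2 − 1. In particular, for ℓ ≥ 200 there is no (ℓ, k, 1/10, 1/2)-SCS with k < ℓ/20. -/
/-!
Two strings of `G` with the same encoding get answers within `εℓ/2` of each other's true
counts on every query; querying the coordinates where the first is 1 and the second 0 shows
that they differ in at most `2εℓ ≤ ℓ/5` places. So every fibre of `Encode` on `G` lies in a
Hamming ball of radius `ℓ/5`, which has at most `∑_{i ≤ ℓ/5} C(ℓ, i) ≤ (5/4)^ℓ 4^(ℓ/5)`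
points, and `g 2^ℓ ≤ |G| ≤ 2^k (5/4)^ℓ 4^(ℓ/5)`. Taking logarithms, `5^5 ≤ 2^12` leaves
a margin of `(log 2 / 5) ℓ ≥ 3ℓ/50`.
-/

open Finset Real

section HammingBall

variable {ι : Type*} [Fintype ι]

lemma card_filter_eq_true_and_eq_false_le {s t : ι → Bool} (D : Finset ι → ℝ) {c : ℝ}
    (hs : ∀ q, |D q - #{i ∈ q | s i = true}| ≤ c) (ht : ∀ q, |D q - #{i ∈ q | t i = true}| ≤ c) :
    (#{i | s i = true ∧ t i = false} : ℝ) ≤ 2 * c := by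
  set q : Finset ι := {i | s i = true ∧ t i = false}
  have hsq : {i ∈ q | s i = true} = q := filter_true_of_mem fun i hi => (mem_filter.mp hi).2.1
  have htq : {i ∈ q | t i = true} = ∅ :=
    filter_false_of_mem fun i hi => by simp [(mem_filter.mp hi).2.2]
  have h₁ := hs q
  have h₂ := ht q
  rw [hsq] at h₁
  rw [htq, card_empty, Nat.cast_zero, sub_zero] at h₂
  linarith [abs_le.mp h₁, abs_le.mp h₂]

lemma hammingDist_le_of_abs_sub_card_le {s t : ι → Bool} (D : Finset ι → ℝ) {c : ℝ}
    (hs : ∀ q, |D q - #{i ∈ q | s i = true}| ≤ c) (ht : ∀ q, |D q - #{i ∈ q | t i = true}| ≤ c) :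
    (hammingDist s t : ℝ) ≤ 4 * c := by
  have hcard : hammingDist s t =
      #{i | s i = true ∧ t i = false} + #{i | t i = true ∧ s i = false} := by
    rw [hammingDist, ← card_filter_add_card_filter_not (fun i => s i = true),
      filter_filter, filter_filter]
    congr 2 <;> ext i <;> simp only [mem_filter, mem_univ, true_and] <;>
      cases s i <;> cases t i <;> simp
  have hst := card_filter_eq_true_and_eq_false_le D hs ht
  have hts := card_filter_eq_true_and_eq_false_le D ht hs
  rw [hcard, Nat.cast_add]
  linarith

lemma card_filter_hammingDist_le_le_sum_choose [DecidableEq ι] (s : ι → Bool) (r : ℕ) :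
    #{t | hammingDist s t ≤ r} ≤ ∑ i ∈ range (r + 1), (Fintype.card ι).choose i := by
  let diff : (ι → Bool) → Finset ι := fun t => {i | s i ≠ t i}
  have hmaps : ∀ t ∈ ({t | hammingDist s t ≤ r} : Finset (ι → Bool)),
      diff t ∈ (range (r + 1)).biUnion fun i => powersetCard i univ := by
    intro t ht
    simp only [mem_filter, mem_univ, true_and] at ht
    exact mem_biUnion.mpr ⟨hammingDist s t, mem_range.mpr (Nat.lt_succ_of_le ht),
      mem_powersetCard.mpr ⟨subset_univ _, rfl⟩⟩
  have hinj : Set.InjOn diff ({t | hammingDist s t ≤ r} : Finset (ι → Bool)) := by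
    intro t _ t' _ h
    funext i
    have hi : s i ≠ t i ↔ s i ≠ t' i := by simpa [diff] using congrArg (i ∈ ·) h
    revert hi
    cases s i <;> cases t i <;> cases t' i <;> simp
  calc #{t | hammingDist s t ≤ r}
      ≤ #((range (r + 1)).biUnion fun i => powersetCard i (univ : Finset ι)) :=
        card_le_card_of_injOn diff hmaps hinj
    _ ≤ ∑ i ∈ range (r + 1), #(powersetCard i (univ : Finset ι)) := card_biUnion_le
    _ = ∑ i ∈ range (r + 1), (Fintype.card ι).choose i := by
        simp only [card_powersetCard, card_univ]

end HammingBall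

lemma sum_range_choose_mul_pow_le {x : ℝ} (hx₀ : 0 ≤ x) (hx₁ : x ≤ 1) {r n : ℕ} (hr : r ≤ n) :
    (∑ i ∈ range (r + 1), (n.choose i : ℝ)) * x ^ r ≤ (1 + x) ^ n := by
  rw [sum_mul, add_comm 1 x, add_pow]
  calc ∑ i ∈ range (r + 1), (n.choose i : ℝ) * x ^ r
      ≤ ∑ i ∈ range (r + 1), x ^ i * 1 ^ (n - i) * n.choose i := by
        refine sum_le_sum fun i hi => ?_
        rw [one_pow, mul_one, mul_comm (x ^ i)]
        exact mul_le_mul_of_nonneg_left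
          (pow_le_pow_of_le_one hx₀ hx₁ (Nat.lt_succ_iff.mp (mem_range.mp hi))) (Nat.cast_nonneg _)
    _ ≤ ∑ i ∈ range (n + 1), x ^ i * 1 ^ (n - i) * n.choose i :=
        sum_le_sum_of_subset_of_nonneg (range_subset_range.mpr (by omega))
          fun _ _ _ => by positivity

lemma log_five_add_le : log 5 + 3 / 50 ≤ 13 / 5 * log 2 := by
  have h : 5 * log 5 ≤ 12 * log 2 := by
    have := log_le_log (by norm_num) (show (5 : ℝ) ^ 5 ≤ 2 ^ 12 by norm_num)
    rwa [log_pow, log_pow, Nat.cast_ofNat, Nat.cast_ofNat] at this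
  linarith [log_two_gt_d9]

theorem card_le_sum_choose_mul_card {ι α : Type*} [Fintype ι] [DecidableEq ι] [Fintype α]
    [DecidableEq α] (encode : (ι → Bool) → α) (decode : α → Finset ι → ℝ) {c : ℝ} {r : ℕ}
    (hr : 4 * c < r + 1) (G : Finset (ι → Bool))
    (hcorrect : ∀ s ∈ G, ∀ q, |decode (encode s) q - #{i ∈ q | s i = true}| ≤ c) :
    #G ≤ (∑ i ∈ range (r + 1), (Fintype.card ι).choose i) * Fintype.card α := by
  refine card_le_mul_card_image_of_maps_to (f := encode) (t := univ) (fun _ _ => mem_univ _) _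
    fun v _ => ?_
  rcases ({s ∈ G | encode s = v}).eq_empty_or_nonempty with h | ⟨s₀, hs₀⟩
  · simp [h]
  refine (card_le_card fun t ht => ?_).trans (card_filter_hammingDist_le_le_sum_choose s₀ r)
  rw [mem_filter] at hs₀ ht
  have hd : (hammingDist s₀ t : ℝ) < r + 1 :=
    (hammingDist_le_of_abs_sub_card_le (decode v) (hs₀.2 ▸ hcorrect s₀ hs₀.1)
      (ht.2 ▸ hcorrect t ht.1)).trans_lt hr
  simpa [Nat.lt_succ_iff] using (by exact_mod_cast hd : hammingDist s₀ t < r + 1)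

lemma log_add_le_mul_log_two {g : ℝ} (hg : 0 < g) {ℓ k : ℕ}
    (h : g * 2 ^ ℓ ≤ 2 ^ k * ∑ i ∈ range (ℓ / 5 + 1), (ℓ.choose i : ℝ)) :
    log g + 3 * ℓ / 50 ≤ k * log 2 := by
  set r := ℓ / 5
  have hball := sum_range_choose_mul_pow_le (x := 1 / 4) (by norm_num) (by norm_num)
    (Nat.div_le_self ℓ 5)
  have hpow : g * 2 ^ ℓ * (1 / 4) ^ r ≤ 2 ^ k * (5 / 4) ^ ℓ := by
    calc g * 2 ^ ℓ * (1 / 4) ^ r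
        ≤ 2 ^ k * (∑ i ∈ range (r + 1), (ℓ.choose i : ℝ)) * (1 / 4) ^ r := by gcongr
      _ ≤ 2 ^ k * (5 / 4) ^ ℓ := by
        rw [mul_assoc]
        gcongr
        exact hball.trans_eq (by norm_num)
  have hlog := log_le_log (by positivity) hpow
  rw [log_mul (by positivity) (by positivity), log_mul (by positivity) (by positivity),
    log_mul (by positivity) (by positivity), log_pow, log_pow, log_pow, log_pow,
    one_div, log_inv, log_div (by norm_num) (by norm_num),
    show (4 : ℝ) = 2 ^ 2 by norm_num, log_pow, Nat.cast_ofNat] at hlog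
  have hr : (r : ℝ) * log 2 ≤ ℓ / 5 * log 2 := by
    gcongr
    rw [le_div_iff₀ (by norm_num)]
    exact_mod_cast Nat.div_mul_le_self ℓ 5
  nlinarith [log_five_add_le, log_two_gt_d9]

/-- Lower bound on the bit complexity `k` of any `(ℓ, k, ε, g)`-string compression scheme
with `ε ≤ 1/10`; in particular for `ℓ ≥ 200` there is no `(ℓ, k, 1/10, 1/2)`-SCS with
`k < ℓ/20`. -/
theorem stmt_6 (ℓ k : ℕ) (ε g : ℝ) (hg : 0 < g)
    (Encode : (Fin ℓ → Bool) → (Fin k → Bool))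
    (Decode : (Fin k → Bool) → Finset (Fin ℓ) → ℕ)
    (G : Finset (Fin ℓ → Bool))
    (hG : (g * 2 ^ ℓ : ℝ) ≤ G.card)
    (hcorrect : ∀ s ∈ G, ∀ q : Finset (Fin ℓ),
      |(Decode (Encode s) q : ℝ) - ((q.filter fun i => s i = true).card : ℝ)| ≤ ε * ℓ / 2)
    (hε : ε ≤ 1 / 10) :
    (Real.log g + 3 * ℓ / 50) / Real.log 2 - 1 ≤ (k : ℝ) ∧
      (200 ≤ ℓ → ε = 1 / 10 → g = 1 / 2 → (ℓ : ℝ) / 20 ≤ (k : ℝ)) := by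
  have hradius : 4 * (ε * ℓ / 2) < ((ℓ / 5 : ℕ) : ℝ) + 1 := by
    have hfloor : (ℓ : ℝ) < 5 * ((ℓ / 5 : ℕ) + 1) := by
      exact_mod_cast (by omega : ℓ < 5 * (ℓ / 5 + 1))
    nlinarith [(Nat.cast_nonneg ℓ : (0 : ℝ) ≤ ℓ)]
  have hcount :=
    card_le_sum_choose_mul_card Encode (fun v q => (Decode v q : ℝ)) hradius G hcorrect
  have hmain : log g + 3 * ℓ / 50 ≤ k * log 2 := by
    refine log_add_le_mul_log_two hg (hG.trans ?_)
    simp only [Fintype.card_fin, Fintype.card_fun, Fintype.card_bool] at hcount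
    rw [mul_comm]
    exact_mod_cast hcount
  have hlog2 := log_two_gt_d9
  refine ⟨?_, fun hℓ _ hg2 => ?_⟩
  · rw [sub_le_iff_le_add, div_le_iff₀ (by linarith)]
    linarith
  · rw [hg2, one_div, log_inv] at hmain
    have hk : ((k : ℝ) + 1) * log 2 ≤ (k + 1) * (7 / 10) := by
      gcongr
      linarith [log_two_lt_d9]
    have hℓ' : (200 : ℝ) ≤ ℓ := by exact_mod_cast hℓ
    linarith
end

section
/- Let X₁, …, X_n be independent random variables taking values in [0, a], let S = Σᵢ Xᵢ. Then for every δ ∈ [0,1] and α > 0, P[|S − E[S]| ≥ δ·E[S] + α] ≤ 2·exp(−δα/(3a)). -/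
open MeasureTheory ProbabilityTheory Real

/-!
By convexity, `exp (t x)` lies below its chord on `[0, a]`, so a variable `Y` with values in
`[0, a]` has `mgf Y t ≤ exp ((exp (t a) - 1) E[Y] / a)`; by independence the same bound holds for
`S` with `E[S] = m`. Markov's inequality for `exp (t S)` with `t = ± δ / a`, together with
`exp s ≤ 1 + s + s²` for `|s| ≤ 1`, then bounds each of the tails `S ≥ m + (δ m + α)` and
`S ≤ m - (δ m + α)` by `exp (-δ α / a)`: the `δ m`-terms cancel exactly.
-/

lemma exp_mul_le_one_add_mul_of_mem_Icc {a t x : ℝ} (ha : 0 < a) (hx : x ∈ Set.Icc 0 a) :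
    exp (t * x) ≤ 1 + (exp (t * a) - 1) / a * x := by
  have hw₀ : 0 ≤ 1 - x / a := by rw [sub_nonneg, div_le_one ha]; exact hx.2
  have hw₁ : 0 ≤ x / a := div_nonneg hx.1 ha.le
  have hchord := convexOn_exp.2 (Set.mem_univ 0) (Set.mem_univ (t * a)) hw₀ hw₁ (by ring)
  simp only [smul_eq_mul, mul_zero, zero_add, exp_zero, mul_one] at hchord
  calc exp (t * x) = exp (x / a * (t * a)) := by field_simp
    _ ≤ 1 - x / a + x / a * exp (t * a) := hchord
    _ = 1 + (exp (t * a) - 1) / a * x := by ring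

lemma exp_sub_one_le_add_sq {s : ℝ} (hs : |s| ≤ 1) : exp s - 1 ≤ s + s ^ 2 := by
  linarith [(abs_le.1 (abs_exp_sub_one_sub_id_le hs)).2]

namespace ProbabilityTheory

section Moments

variable {Ω : Type*} [MeasurableSpace Ω] {μ : Measure Ω} [IsProbabilityMeasure μ] {a : ℝ}

lemma mgf_le_exp_of_mem_Icc {Y : Ω → ℝ} (ha : 0 < a) (hY : AEMeasurable Y μ)
    (hbdd : ∀ᵐ ω ∂μ, Y ω ∈ Set.Icc 0 a) (t : ℝ) :
    mgf Y μ t ≤ exp ((exp (t * a) - 1) * μ[Y] / a) := by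
  have hYint : Integrable Y μ := .of_mem_Icc 0 a hY hbdd
  calc mgf Y μ t ≤ ∫ ω, (1 + (exp (t * a) - 1) / a * Y ω) ∂μ :=
        integral_mono_ae (integrable_exp_mul_of_mem_Icc hY hbdd)
          ((integrable_const 1).add (hYint.const_mul _))
          (hbdd.mono fun ω hω => exp_mul_le_one_add_mul_of_mem_Icc ha hω)
    _ = (exp (t * a) - 1) * μ[Y] / a + 1 := by
        rw [integral_add (integrable_const 1) (hYint.const_mul _), integral_const,
          integral_const_mul]
        simp only [probReal_univ, smul_eq_mul, one_mul]
        ring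
    _ ≤ exp ((exp (t * a) - 1) * μ[Y] / a) := add_one_le_exp _

lemma iIndepFun.mgf_sum_le_exp {ι : Type*} {X : ι → Ω → ℝ} (hindep : iIndepFun X μ)
    (ha : 0 < a) (hmeas : ∀ i, AEMeasurable (X i) μ)
    (hbdd : ∀ i, ∀ᵐ ω ∂μ, X i ω ∈ Set.Icc 0 a) (s : Finset ι) (t : ℝ) :
    mgf (∑ i ∈ s, X i) μ t ≤ exp ((exp (t * a) - 1) * (∑ i ∈ s, μ[X i]) / a) := by
  rw [hindep.mgf_sum₀ hmeas, Finset.mul_sum, Finset.sum_div, exp_sum]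
  exact Finset.prod_le_prod (fun i _ => mgf_nonneg)
    fun i _ => mgf_le_exp_of_mem_Icc ha (hmeas i) (hbdd i) t

end Moments

section Tails

variable {Ω : Type*} [MeasurableSpace Ω] {μ : Measure Ω} {S : Ω → ℝ} {a m δ : ℝ}

lemma exp_neg_mul_mul_mgf_le (ha : 0 < a) (hm : 0 ≤ m)
    (hmgf : ∀ t, mgf S μ t ≤ exp ((exp (t * a) - 1) * m / a)) {s : ℝ} (hs : |s| ≤ 1) (c : ℝ) :
    exp (-(s / a) * c) * mgf S μ (s / a) ≤ exp ((-(s * c) + (s + s ^ 2) * m) / a) := by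
  calc exp (-(s / a) * c) * mgf S μ (s / a)
      ≤ exp (-(s / a) * c) * exp ((exp s - 1) * m / a) := by
        gcongr
        simpa only [div_mul_cancel₀ s ha.ne'] using hmgf (s / a)
    _ = exp ((-(s * c) + (exp s - 1) * m) / a) := by
        rw [← exp_add]
        congr 1
        ring
    _ ≤ exp ((-(s * c) + (s + s ^ 2) * m) / a) := by
        gcongr
        exact exp_sub_one_le_add_sq hs

variable [IsProbabilityMeasure μ] (ha : 0 < a) (hm : 0 ≤ m) (hδ : δ ∈ Set.Icc 0 1)
  (hmgf : ∀ t, mgf S μ t ≤ exp ((exp (t * a) - 1) * m / a))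
  (hint : ∀ t, Integrable (fun ω => exp (t * S ω)) μ)
include ha hm hδ hmgf hint

lemma measureReal_ge_add_le_exp (α : ℝ) :
    μ.real {ω | m + (δ * m + α) ≤ S ω} ≤ exp (-(δ * α) / a) := by
  have hδ₁ : |δ| ≤ 1 := abs_le.2 ⟨by linarith [hδ.1], hδ.2⟩
  calc μ.real {ω | m + (δ * m + α) ≤ S ω}
      ≤ exp (-(δ / a) * (m + (δ * m + α))) * mgf S μ (δ / a) :=
        measure_ge_le_exp_mul_mgf _ (div_nonneg hδ.1 ha.le) (hint _)
    _ ≤ exp ((-(δ * (m + (δ * m + α))) + (δ + δ ^ 2) * m) / a) :=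
        exp_neg_mul_mul_mgf_le ha hm hmgf hδ₁ _
    _ = exp (-(δ * α) / a) := by ring_nf

lemma measureReal_le_sub_le_exp (α : ℝ) :
    μ.real {ω | S ω ≤ m - (δ * m + α)} ≤ exp (-(δ * α) / a) := by
  have hδ₁ : |-δ| ≤ 1 := by rw [abs_neg]; exact abs_le.2 ⟨by linarith [hδ.1], hδ.2⟩
  calc μ.real {ω | S ω ≤ m - (δ * m + α)}
      ≤ exp (-(-δ / a) * (m - (δ * m + α))) * mgf S μ (-δ / a) :=
        measure_le_le_exp_mul_mgf _ (div_nonpos_of_nonpos_of_nonneg (neg_nonpos.2 hδ.1) ha.le)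
          (hint _)
    _ ≤ exp ((-(-δ * (m - (δ * m + α))) + (-δ + (-δ) ^ 2) * m) / a) :=
        exp_neg_mul_mul_mgf_le ha hm hmgf hδ₁ _
    _ = exp (-(δ * α) / a) := by ring_nf

lemma measure_le_abs_sub_le_two_mul_exp (α : ℝ) :
    μ {ω | δ * m + α ≤ |S ω - m|} ≤ ENNReal.ofReal (2 * exp (-(δ * α) / a)) := by
  have hsplit : {ω | δ * m + α ≤ |S ω - m|} ⊆
      {ω | m + (δ * m + α) ≤ S ω} ∪ {ω | S ω ≤ m - (δ * m + α)} := by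
    intro ω (hω : δ * m + α ≤ |S ω - m|)
    rcases le_abs'.1 hω with h | h
    · exact Or.inr (show S ω ≤ m - (δ * m + α) by linarith)
    · exact Or.inl (show m + (δ * m + α) ≤ S ω by linarith)
  rw [← ofReal_measureReal]
  gcongr
  calc μ.real {ω | δ * m + α ≤ |S ω - m|}
      ≤ μ.real {ω | m + (δ * m + α) ≤ S ω} + μ.real {ω | S ω ≤ m - (δ * m + α)} :=
        (measureReal_mono hsplit).trans (measureReal_union_le _ _)
    _ ≤ 2 * exp (-(δ * α) / a) := by
        linarith [measureReal_ge_add_le_exp ha hm hδ hmgf hint α,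
          measureReal_le_sub_le_exp ha hm hδ hmgf hint α]

end Tails

end ProbabilityTheory

/-- Additive-multiplicative Chernoff bound: for independent random variables `X i` with
values in `[0, a]` and `S = ∑ i, X i`, for `δ ∈ [0,1]` and `α > 0`,
`P[|S − E S| ≥ δ E S + α] ≤ 2 exp(−δα/(3a))`. -/
theorem stmt_8 {Ω : Type*} [MeasurableSpace Ω] (μ : Measure Ω) [IsProbabilityMeasure μ]
    (n : ℕ) (a : ℝ) (ha : 0 < a) (X : Fin n → Ω → ℝ)
    (hmeas : ∀ i, Measurable (X i))
    (hindep : iIndepFun X μ)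
    (hbdd : ∀ i, ∀ ω, X i ω ∈ Set.Icc 0 a)
    (δ α : ℝ) (hδ : δ ∈ Set.Icc (0 : ℝ) 1) (hα : 0 < α) :
    μ {ω | δ * (∫ ω', ∑ i, X i ω' ∂μ) + α ≤
        |(∑ i, X i ω) - ∫ ω', ∑ i, X i ω' ∂μ|} ≤
      ENNReal.ofReal (2 * Real.exp (-(δ * α) / (3 * a))) := by
  have hbdd_ae : ∀ i, ∀ᵐ ω ∂μ, X i ω ∈ Set.Icc 0 a := fun i => ae_of_all _ (hbdd i)
  have hmean : ∫ ω, ∑ i, X i ω ∂μ = ∑ i, μ[X i] :=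
    integral_finsetSum _ fun i _ => .of_mem_Icc 0 a (hmeas i).aemeasurable (hbdd_ae i)
  have hm : 0 ≤ ∑ i, μ[X i] := Finset.sum_nonneg fun i _ => integral_nonneg fun ω => (hbdd i ω).1
  have hexp (t : ℝ) : Integrable (fun ω => exp (t * (∑ i, X i) ω)) μ :=
    hindep.integrable_exp_mul_sum hmeas fun i _ =>
      integrable_exp_mul_of_mem_Icc (hmeas i).aemeasurable (hbdd_ae i)
  have htails := measure_le_abs_sub_le_two_mul_exp ha hm hδ
    (hindep.mgf_sum_le_exp ha (fun i => (hmeas i).aemeasurable) hbdd_ae Finset.univ) hexp α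
  simp only [Finset.sum_apply] at htails
  rw [hmean]
  refine htails.trans (ENNReal.ofReal_le_ofReal ?_)
  have hδα : 0 ≤ δ * α := mul_nonneg hδ.1 hα.le
  gcongr 2 * exp ?_
  rw [neg_div, neg_div, neg_le_neg_iff]
  exact div_le_div_of_nonneg_left hδα ha (by linarith)
end
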